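/- arXiv:1308.1976 — 2 statements merged into one kernel-verified Lean document; each statement's English description precedes it below -/
import Mathlib

section
/- Let X be a group that is residually a finite π-group, let x ∈ X, and let y ∈ X satisfy y^q ∈ ⟨x⟩ for some π'-number q. Then the subgroup ⟨x, y⟩ is cyclic. -/
/-!
In a finite quotient of π-order, raising to a π'-power `q` is a bijection, so modulo every
`N ∈ Ω_π(X)` the element `y` is a power of `y ^ q`, hence of `x`. Thus `⁅x, y⁆` lies in every
such `N` and is trivial; in the same way `X` has no π'-torsion. Writing `x ^ k = y ^ q` with
`g = gcd(k, q)`, `k = g k'`, `q = g q'`, the element `x ^ k' * y ^ (-q')` has order dividing the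
π'-number `g`, so `x ^ k' = y ^ q'`. If `u k' + v q' = 1`, then `z = x ^ v * y ^ u` satisfies
`z ^ q' = x` and `z ^ k' = y`, so `⟨x, y⟩ = ⟨z⟩`.
-/

open Pointwise

def IsPiNumber (π : Set ℕ) (n : ℕ) : Prop := n ≠ 0 ∧ ∀ p : ℕ, p.Prime → p ∣ n → p ∈ π

def IsPiPrimeNumber (π : Set ℕ) (n : ℕ) : Prop := n ≠ 0 ∧ ∀ p : ℕ, p.Prime → p ∣ n → p ∉ π

/-- `N` is a normal subgroup of finite π-index, i.e. `N ∈ Ω_π(X)`. -/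
def InOmega (π : Set ℕ) {X : Type*} [Group X] (N : Subgroup X) : Prop :=
  N.Normal ∧ IsPiNumber π N.index

/-- `Y` is separable by the family `F` of subgroups. -/
def SepBy {X : Type*} [Group X] (F : Set (Subgroup X)) (Y : Subgroup X) : Prop :=
  (⋂ N ∈ F, (Y : Set X) * (N : Set X)) = (Y : Set X)

/-- `Y` is 𝓕_π-separable in `X`. -/
def SepIn (π : Set ℕ) {X : Type*} [Group X] (Y : Subgroup X) : Prop :=
  SepBy {N : Subgroup X | InOmega π N} Y

/-- `Y` is π'-isolated in `X`. -/
def Isolated (π : Set ℕ) {X : Type*} [Group X] (Y : Subgroup X) : Prop :=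
  ∀ x : X, ∀ q : ℕ, IsPiPrimeNumber π q → x ^ q ∈ Y → x ∈ Y

/-- `X` is residually a finite π-group. -/
def ResiduallyPi (π : Set ℕ) (X : Type*) [Group X] : Prop :=
  ∀ x : X, x ≠ 1 → ∃ N : Subgroup X, InOmega π N ∧ x ∉ N

lemma IsPiPrimeNumber.coprime {π : Set ℕ} {q n : ℕ} (hq : IsPiPrimeNumber π q)
    (hn : IsPiNumber π n) : q.Coprime n :=
  Nat.coprime_of_dvd fun p hp hpq hpn => hq.2 p hp hpq (hn.2 p hp hpn)

lemma IsPiPrimeNumber.of_dvd {π : Set ℕ} {q d : ℕ} (hq : IsPiPrimeNumber π q) (hd : d ∣ q) :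
    IsPiPrimeNumber π d :=
  ⟨ne_zero_of_dvd_ne_zero hq.1 hd, fun p hp hpd => hq.2 p hp (hpd.trans hd)⟩

lemma exists_pow_pow_eq_self_of_isPiNumber_card {π : Set ℕ} {G : Type*} [Group G]
    (hG : IsPiNumber π (Nat.card G)) {q : ℕ} (hq : IsPiPrimeNumber π q) (g : G) :
    ∃ m : ℕ, (g ^ q) ^ m = g :=
  exists_pow_eq_self_of_coprime ((hq.coprime hG).coprime_dvd_right (orderOf_dvd_natCard g))

namespace ResiduallyPi

variable {π : Set ℕ} {X : Type*} [Group X]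

lemma eq_one_of_pow_eq_one (hres : ResiduallyPi π X) {q : ℕ} (hq : IsPiPrimeNumber π q)
    {t : X} (ht : t ^ q = 1) : t = 1 := by
  by_contra hne
  obtain ⟨N, ⟨_, hN⟩, htN⟩ := hres t hne
  obtain ⟨m, hm⟩ := exists_pow_pow_eq_self_of_isPiNumber_card hN hq (t : X ⧸ N)
  rw [← QuotientGroup.mk_pow, ht, QuotientGroup.mk_one, one_pow, eq_comm,
    QuotientGroup.eq_one_iff] at hm
  exact htN hm

lemma commute_of_pow_mem_zpowers (hres : ResiduallyPi π X) {q : ℕ} (hq : IsPiPrimeNumber π q)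
    {x y : X} (hy : y ^ q ∈ Subgroup.zpowers x) : Commute x y := by
  obtain ⟨k, hk⟩ := hy
  rw [← commutatorElement_eq_one_iff_commute]
  by_contra hne
  obtain ⟨N, ⟨_, hN⟩, hxyN⟩ := hres _ hne
  apply hxyN
  obtain ⟨m, hm⟩ := exists_pow_pow_eq_self_of_isPiNumber_card hN hq (QuotientGroup.mk' N y)
  have hcomm : Commute (QuotientGroup.mk' N x) (QuotientGroup.mk' N y) := by
    rw [← hm, ← map_pow, ← hk, map_zpow]
    exact ((Commute.refl _).zpow_right k).pow_right m
  rw [← QuotientGroup.eq_one_iff, ← QuotientGroup.mk'_apply, map_commutatorElement,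
    commutatorElement_eq_one_iff_commute]
  exact hcomm

end ResiduallyPi

namespace Commute

variable {G : Type*} [Group G] {x y : G}

lemma exists_isCoprime_zpow_eq_zpow (hc : Commute x y) {k q : ℤ} (hq : q ≠ 0)
    (h : x ^ k = y ^ q) (htf : ∀ t : G, t ^ Int.gcd k q = 1 → t = 1) :
    ∃ a b : ℤ, IsCoprime a b ∧ x ^ a = y ^ b := by
  obtain ⟨a, b, hab, hka, hqb⟩ := Int.exists_gcd_one (Int.gcd_pos_of_ne_zero_right k hq)
  refine ⟨a, b, Int.isCoprime_iff_gcd_eq_one.mpr hab, ?_⟩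
  rw [← mul_inv_eq_one]
  apply htf
  rw [(hc.zpow_zpow a b).inv_right.mul_pow, inv_pow, ← zpow_natCast, ← zpow_natCast,
    ← zpow_mul, ← zpow_mul, ← hka, ← hqb, h, mul_inv_cancel]

lemma isCyclic_closure_pair (hc : Commute x y) {a b : ℤ} (hab : IsCoprime a b)
    (h : x ^ a = y ^ b) : IsCyclic (Subgroup.closure ({x, y} : Set G)) := by
  obtain ⟨u, v, huv⟩ := hab
  set z := x ^ v * y ^ u
  have hz (n : ℤ) : z ^ n = x ^ (v * n) * y ^ (u * n) := by
    rw [(hc.zpow_zpow v u).mul_zpow, zpow_mul, zpow_mul]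
  have hx : z ^ b = x := by
    rw [hz, mul_comm u, zpow_mul y b, ← h, ← zpow_mul, ← zpow_add,
      show v * b + a * u = 1 by linear_combination huv, zpow_one]
  have hy : z ^ a = y := by
    rw [hz, mul_comm v, zpow_mul x a, h, ← zpow_mul, ← zpow_add,
      show b * v + u * a = 1 by linear_combination huv, zpow_one]
  have hzmem : z ∈ Subgroup.closure ({x, y} : Set G) :=
    mul_mem (zpow_mem (Subgroup.subset_closure (by simp)) v)
      (zpow_mem (Subgroup.subset_closure (by simp)) u)
  have heq : Subgroup.closure ({x, y} : Set G) = Subgroup.zpowers z := by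
    refine le_antisymm ?_ (Subgroup.zpowers_le.mpr hzmem)
    rw [Subgroup.closure_le, Set.insert_subset_iff, Set.singleton_subset_iff]
    exact ⟨⟨b, hx⟩, ⟨a, hy⟩⟩
  rw [heq]
  infer_instance

end Commute

/-- If `X` is residually a finite π-group and `y ^ q ∈ ⟨x⟩` for a π'-number `q`,
then `⟨x, y⟩` is cyclic. -/
theorem cyclic_of_piPrime_root (π : Set ℕ) {X : Type*} [Group X]
    (hres : ResiduallyPi π X) (x y : X) (q : ℕ) (hq : IsPiPrimeNumber π q)
    (hy : y ^ q ∈ Subgroup.zpowers x) :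
    IsCyclic ↥(Subgroup.closure ({x, y} : Set X)) := by
  have hc : Commute x y := hres.commute_of_pow_mem_zpowers hq hy
  obtain ⟨k, hk⟩ := Subgroup.mem_zpowers_iff.mp hy
  rw [← zpow_natCast] at hk
  have htf (t : X) (ht : t ^ Int.gcd k q = 1) : t = 1 :=
    hres.eq_one_of_pow_eq_one (hq.of_dvd (Nat.gcd_dvd_right _ _)) ht
  obtain ⟨a, b, hab, hxy⟩ :=
    hc.exists_isCoprime_zpow_eq_zpow (Int.natCast_ne_zero.mpr hq.1) hk htf
  exact hc.isCyclic_closure_pair hab hxy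
end

section
/- Let H and K be groups and let G = H × K be their direct product. Let C = ⟨(h,k)⟩ be a cyclic subgroup with h ∈ H of finite order and k ∈ K of finite order, and suppose H and K are residually finite π-groups. Then for every g ∈ G ∖ C there exist normal subgroups X of H and Y of K with finite π-group quotients such that g ∉ C·(X × Y). -/
open Pointwise

/-! Since `(h, k)` has finite order, `C = ⟨(h, k)⟩` is finite, so `g ∉ C` leaves only finitely many
nontrivial elements `c⁻¹ g`, `c ∈ C`, to exclude. Each of their nontrivial coordinates is excluded by
some normal subgroup of finite π-index of `H` or `K`; since such subgroups are closed under finite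
intersections, one pair `X, Y` excludes them all, and then `g ∉ C (X × Y)`. -/

theorem isPiNumber_one (π : Set ℕ) : IsPiNumber π 1 :=
  ⟨one_ne_zero, fun _ hp hdvd => absurd (Nat.dvd_one.mp hdvd) hp.ne_one⟩

theorem IsPiNumber.mul {π : Set ℕ} {m n : ℕ} (hm : IsPiNumber π m) (hn : IsPiNumber π n) :
    IsPiNumber π (m * n) :=
  ⟨mul_ne_zero hm.1 hn.1, fun p hp hdvd => (hp.dvd_mul.mp hdvd).elim (hm.2 p hp) (hn.2 p hp)⟩

theorem IsPiNumber.of_dvd {π : Set ℕ} {m n : ℕ} (hm : IsPiNumber π m) (hnm : n ∣ m) :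
    IsPiNumber π n :=
  ⟨fun hn => hm.1 (Nat.eq_zero_of_zero_dvd (hn ▸ hnm)), fun p hp hpn => hm.2 p hp (hpn.trans hnm)⟩

theorem Subgroup.index_inf_dvd_of_normal {G : Type*} [Group G] (N M : Subgroup G) [N.Normal] :
    (N ⊓ M).index ∣ N.index * M.index := by
  rw [← relIndex_mul_index (inf_le_right : N ⊓ M ≤ M), inf_relIndex_right]
  exact Nat.mul_dvd_mul (relIndex_dvd_index_of_normal N M) dvd_rfl

section InOmega

variable {π : Set ℕ} {G : Type*} [Group G]

theorem inOmega_top : InOmega π (⊤ : Subgroup G) := by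
  refine ⟨inferInstance, ?_⟩
  rw [Subgroup.index_top]
  exact isPiNumber_one π

theorem InOmega.inf {N M : Subgroup G} (hN : InOmega π N) (hM : InOmega π M) :
    InOmega π (N ⊓ M) :=
  haveI := hN.1
  haveI := hM.1
  ⟨inferInstance, (hN.2.mul hM.2).of_dvd (Subgroup.index_inf_dvd_of_normal N M)⟩

theorem ResiduallyPi.exists_inOmega_disjoint (hG : ResiduallyPi π G) {S : Set G} (hS : S.Finite)
    (hS1 : (1 : G) ∉ S) : ∃ N : Subgroup G, InOmega π N ∧ Disjoint S (N : Set G) := by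
  induction S, hS using Set.Finite.induction_on with
  | empty => exact ⟨⊤, inOmega_top, Set.empty_disjoint _⟩
  | @insert x S _ _ ih =>
    obtain ⟨hx1, hS1⟩ : x ≠ 1 ∧ (1 : G) ∉ S := by
      simpa [eq_comm] using hS1
    obtain ⟨Nx, hNx, hxNx⟩ := hG x hx1
    obtain ⟨NS, hNS, hSNS⟩ := ih hS1
    refine ⟨Nx ⊓ NS, hNx.inf hNS, Set.disjoint_insert_left.mpr ⟨fun hx => hxNx hx.1, ?_⟩⟩
    exact hSNS.mono_right Set.inter_subset_right

theorem exists_inOmega_prod_disjoint {H K : Type*} [Group H] [Group K]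
    (hH : ResiduallyPi π H) (hK : ResiduallyPi π K) {S : Set (H × K)} (hS : S.Finite)
    (hS1 : (1 : H × K) ∉ S) : ∃ X : Subgroup H, ∃ Y : Subgroup K, InOmega π X ∧ InOmega π Y ∧
      Disjoint S ((X.prod Y : Subgroup (H × K)) : Set (H × K)) := by
  obtain ⟨X, hX, hSX⟩ :=
    hH.exists_inOmega_disjoint ((hS.image Prod.fst).sdiff (t := {1})) (fun h1 => h1.2 rfl)
  obtain ⟨Y, hY, hSY⟩ :=
    hK.exists_inOmega_disjoint ((hS.image Prod.snd).sdiff (t := {1})) (fun h1 => h1.2 rfl)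
  refine ⟨X, Y, hX, hY, Set.disjoint_left.mpr fun s hs hsXY => hS1 ?_⟩
  obtain ⟨hs1, hs2⟩ := Subgroup.mem_prod.mp hsXY
  have h1 : s.1 = 1 := by_contra fun hne => Set.disjoint_left.mp hSX ⟨⟨s, hs, rfl⟩, hne⟩ hs1
  have h2 : s.2 = 1 := by_contra fun hne => Set.disjoint_left.mp hSY ⟨⟨s, hs, rfl⟩, hne⟩ hs2
  rwa [show s = 1 from Prod.ext h1 h2] at hs

end InOmega

/-- Separability of a finite cyclic subgroup of a direct product by the family
`Θ_π`: the finite-`C` case. -/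
theorem finite_cyclic_sep_in_product (π : Set ℕ) {H K : Type*} [Group H] [Group K]
    (hH : ResiduallyPi π H) (hK : ResiduallyPi π K)
    (h : H) (k : K) (hh : IsOfFinOrder h) (hk : IsOfFinOrder k) :
    ∀ g : H × K, g ∉ Subgroup.zpowers (h, k) →
      ∃ X : Subgroup H, ∃ Y : Subgroup K, InOmega π X ∧ InOmega π Y ∧
        g ∉ ((Subgroup.zpowers (h, k) : Subgroup (H × K)) : Set (H × K)) *
            ((X.prod Y : Subgroup (H × K)) : Set (H × K)) := by
  intro g hg
  set C := Subgroup.zpowers (h, k)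
  have hC : (C : Set (H × K)).Finite := finite_zpowers.mpr (hh.prod_mk hk)
  have h1 : (1 : H × K) ∉ (fun c => c⁻¹ * g) '' C := by
    rintro ⟨c, hc, hcg⟩
    exact hg (inv_mul_eq_one.mp hcg ▸ hc)
  obtain ⟨X, Y, hX, hY, hdisj⟩ := exists_inOmega_prod_disjoint hH hK (hC.image _) h1
  refine ⟨X, Y, hX, hY, ?_⟩
  rintro ⟨c, hc, p, hp, rfl⟩
  exact Set.disjoint_left.mp hdisj ⟨c, hc, inv_mul_cancel_left c p⟩ hp
end
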